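/- arXiv:2206.05492 — 7 statements merged into one kernel-verified Lean document; each statement's English description precedes it below -/
import Mathlib

section
/- Let q be a prime power, k ≥ 2, let ℙ denote the set of points of the projective space ℙ^{k-1} over 𝔽_q, and let 𝒞 : ℙ → ℤ be a function. Define the Radon transform R(𝒞) on the dual projective space by R(𝒞)(H) = Σ_{x ∈ H} 𝒞(x) for each hyperplane H. Then for every point x, q^{k-2} · 𝒞(x) = R(R(𝒞))(x) − ((q^{k-2} − 1)/(q − 1)) · Σ_{y ∈ ℙ} 𝒞(y), where R(R(𝒞))(x) = Σ_{H ∋ x} R(𝒞)(H). -/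
/-!
Exchanging the two sums, `R(R(𝒞))(x) = ∑_y N(x, y) 𝒞(y)`, where `N(x, y)` counts the hyperplanes
through `x` and `y`. Hyperplanes containing a subspace `W` are the points of the projectivized
annihilator of `W`, of dimension `k - dim W`, so `N(x, x) = [k-1]_q` and `N(x, y) = [k-2]_q` for
`y ≠ x`; since `[k-1]_q - [k-2]_q = q^(k-2)` the diagonal term isolates `q^(k-2) 𝒞(x)`.
-/

open Module Projectivization
open scoped LinearAlgebra.Projectivization

theorem finsum_mem_finsum_mem_incident_eq {P B R : Type*} [Finite P] [Finite B] [CommRing R]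
    (I : P → B → Prop) (C : P → R) (x : P) {r l : ℕ}
    (hr : Nat.card {H // I x H} = r) (hl : ∀ y ≠ x, Nat.card {H // I x H ∧ I y H} = l) :
    ∑ᶠ H ∈ {H | I x H}, ∑ᶠ y ∈ {y | I y H}, C y = (r - l : R) * C x + l * ∑ᶠ y, C y := by
  classical
  have := Fintype.ofFinite P
  have := Fintype.ofFinite B
  have hcount : ∀ y, ∑ H ∈ {H | I x H}, (if I y H then C y else 0) =
      Nat.card {H // I x H ∧ I y H} * C y := by
    intro y
    rw [← Finset.sum_filter, Finset.sum_const, Finset.filter_filter, nsmul_eq_mul,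
      Nat.card_eq_fintype_card, Fintype.card_subtype]
  calc ∑ᶠ H ∈ {H | I x H}, ∑ᶠ y ∈ {y | I y H}, C y
      = ∑ H ∈ {H | I x H}, ∑ y, if I y H then C y else 0 := by
        simp only [finsum_mem_eq_toFinset_sum, Set.toFinset_ofPred, Finset.sum_filter]
    _ = ∑ y, Nat.card {H // I x H ∧ I y H} * C y := by
        rw [Finset.sum_comm]
        exact Finset.sum_congr rfl fun y _ => hcount y
    _ = r * C x + ∑ y ∈ {x}ᶜ, l * C y := by
        simp only [Fintype.sum_eq_add_sum_compl x, and_self, hr]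
        refine congrArg _ (Finset.sum_congr rfl fun y hy => ?_)
        rw [hl y (by simpa using hy)]
    _ = (r - l : R) * C x + l * ∑ᶠ y, C y := by
        rw [finsum_eq_sum_of_fintype, Fintype.sum_eq_add_sum_compl x, ← Finset.mul_sum]
        ring

namespace Projectivization

variable {K V : Type*} [Field K] [AddCommGroup V] [Module K V]

theorem rep_map_subtype_mem (W : Submodule K V) (Q : ℙ K W) :
    (map W.subtype W.injective_subtype Q).rep ∈ W := by
  induction Q using Projectivization.ind with
  | h w hw =>
    obtain ⟨a, ha⟩ := exists_smul_eq_mk_rep K (W.subtype w) (by simpa using hw)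
    rw [map_mk, ← ha]
    exact W.smul_mem _ w.2

theorem card_subtype_rep_mem (W : Submodule K V) :
    Nat.card {P : ℙ K V // P.rep ∈ W} = Nat.card (ℙ K W) := by
  refine (Nat.card_eq_of_bijective (fun Q => ⟨_, rep_map_subtype_mem W Q⟩) ⟨?_, ?_⟩).symm
  · intro Q₁ Q₂ h
    exact map_injective W.subtype (σ := RingHom.id K) (τ := RingHom.id K)
      Subtype.coe_injective (congrArg Subtype.val h)
  · rintro ⟨P, hP⟩
    refine ⟨mk K ⟨P.rep, hP⟩ (by simp [P.rep_nonzero, Subtype.ext_iff]), ?_⟩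
    simp only [map_mk, Subtype.mk.injEq]
    exact P.mk_rep

theorem card_dual_forall_rep_apply_eq_zero [Finite K] [FiniteDimensional K V] (s : Set V) :
    Nat.card {H : ℙ K (Dual K V) // ∀ v ∈ s, H.rep v = 0} =
      ∑ i ∈ Finset.range (finrank K V - finrank K (Submodule.span K s)), Nat.card K ^ i := by
  have hmem (H : ℙ K (Dual K V)) :
      (∀ v ∈ s, H.rep v = 0) ↔ H.rep ∈ (Submodule.span K s).dualAnnihilator := by
    rw [← SetLike.mem_coe, Submodule.coe_dualAnnihilator_span]
    rfl
  simp_rw [hmem]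
  rw [card_subtype_rep_mem, card_of_finrank]
  have := Subspace.finrank_add_finrank_dualAnnihilator_eq (Submodule.span K s)
  omega

theorem finrank_span_rep_pair {x y : ℙ K V} (h : x ≠ y) :
    finrank K (Submodule.span K {x.rep, y.rep}) = 2 := by
  have hind : LinearIndependent K ![x.rep, y.rep] := by
    convert independent_iff.mp ((independent_pair_iff_ne x y).mpr h) using 1
    ext i; fin_cases i <;> rfl
  rw [← Matrix.range_cons_cons_empty _ _ ![], finrank_span_eq_card hind]
  simp

variable [Finite K] [FiniteDimensional K V]

theorem card_hyperplanes_through (x : ℙ K V) :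
    Nat.card {H : ℙ K (Dual K V) // H.rep x.rep = 0} =
      ∑ i ∈ Finset.range (finrank K V - 1), Nat.card K ^ i := by
  simpa [finrank_span_singleton x.rep_nonzero] using
    card_dual_forall_rep_apply_eq_zero (K := K) {x.rep}

theorem card_hyperplanes_through_pair {x y : ℙ K V} (h : x ≠ y) :
    Nat.card {H : ℙ K (Dual K V) // H.rep x.rep = 0 ∧ H.rep y.rep = 0} =
      ∑ i ∈ Finset.range (finrank K V - 2), Nat.card K ^ i := by
  simpa [finrank_span_rep_pair h] using
    card_dual_forall_rep_apply_eq_zero (K := K) {x.rep, y.rep}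

end Projectivization

/-- Radon duality on the finite projective space `ℙ^{k-1}(𝔽_q)`:
points are points of `Projectivization F (Fin k → F)`, hyperplanes are points of the
projectivized dual space, and a point `x` lies on the hyperplane `H` iff a representing
functional of `H` vanishes on a representing vector of `x`.  The integer
`(q^{k-2} − 1)/(q − 1)` is written as the geometric sum `∑_{i<k-2} q^i`. -/
theorem stmt0 {F : Type*} [Field F] [Fintype F] (q k : ℕ)
    (hq : Fintype.card F = q) (hk : 2 ≤ k)
    (C : Projectivization F (Fin k → F) → ℤ)
    (x : Projectivization F (Fin k → F)) :
    (q : ℤ) ^ (k - 2) * C x =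
      (∑ᶠ H ∈ {G : Projectivization F (Module.Dual F (Fin k → F)) | G.rep x.rep = 0},
        ∑ᶠ y ∈ {z : Projectivization F (Fin k → F) | H.rep z.rep = 0}, C y)
      - (∑ i ∈ Finset.range (k - 2), (q : ℤ) ^ i) * ∑ᶠ y, C y := by
  have : Finite (Module.Dual F (Fin k → F)) := Module.finite_of_finite F
  rw [finsum_mem_finsum_mem_incident_eq (fun y (H : ℙ F (Dual F (Fin k → F))) => H.rep y.rep = 0)
    C x (card_hyperplanes_through x) fun y hy => card_hyperplanes_through_pair (Ne.symm hy)]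
  obtain ⟨j, rfl⟩ : ∃ j, k = j + 2 := ⟨k - 2, by omega⟩
  simp only [finrank_fin_fun, Nat.card_eq_fintype_card, hq, Nat.add_sub_cancel,
    show j + 2 - 1 = j + 1 by omega, Finset.sum_range_succ]
  push_cast
  ring
end

section
/- Let 𝒞₁, 𝒞₂ : ℙ → ℤ be two functions on the point set ℙ of ℙ^{k-1}(𝔽_q) (k ≥ 2). If their Radon transforms agree, i.e. Σ_{x ∈ H} 𝒞₁(x) = Σ_{x ∈ H} 𝒞₂(x) for every hyperplane H, then 𝒞₁ = 𝒞₂. -/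
/-!
Let `q = |F|`, `n = dim V` and `D = C₁ - C₂`, and sum the Radon transform of `D` over all linear
functionals `φ`, including `φ = 0`, whose kernel is the whole space. A point lies in the kernel of
`q^(n-1)` functionals and two distinct points in the kernel of `q^(n-2)` (the sizes of the
annihilators of a line and of a plane). Summing over all `φ` gives `S = q^(n-1) • S` for the total
sum `S`, so `S = 0`; summing over the `φ` that vanish at `z₀` gives
`0 = q^(n-1) • D z₀ + q^(n-2) • (S - D z₀)`, so `D z₀ = 0`.
-/

section

open Module Finset
open scoped LinearAlgebra.Projectivization

theorem Finset.sum_sum_filter_eq_sum_card_nsmul {α β M : Type*} [AddCommMonoid M] (s : Finset α)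
    (t : Finset β) (r : α → β → Prop) [∀ a b, Decidable (r a b)] (f : β → M) :
    ∑ a ∈ s, ∑ b ∈ t with r a b, f b = ∑ b ∈ t, #{a ∈ s | r a b} • f b := by
  simp_rw [sum_filter]
  rw [sum_comm]
  simp [← sum_filter]

variable {F V : Type*} [Field F] [Fintype F] [AddCommGroup V] [Module F V] [FiniteDimensional F V]

noncomputable instance Module.Dual.instFintypeOfFiniteDimensional : Fintype (Dual F V) :=
  have := Module.finite_of_finite F (M := Dual F V)
  Fintype.ofFinite _

noncomputable instance Projectivization.instFintypeOfFiniteDimensional :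
    Fintype (Projectivization F V) :=
  have := Module.finite_of_finite F (M := V)
  Fintype.ofFinite _

theorem Subspace.natCard_dualAnnihilator (W : Subspace F V) :
    Nat.card W.dualAnnihilator = Fintype.card F ^ (finrank F V - finrank F W) := by
  rw [Module.natCard_eq_pow_finrank (K := F), ← W.finrank_add_finrank_dualAnnihilator_eq,
    Nat.add_sub_cancel_left, Nat.card_eq_fintype_card]

theorem Module.Dual.card_filter_forall_apply_eq_zero [DecidableEq F] {ι : Type*} [Fintype ι]
    {v : ι → V} (hv : LinearIndependent F v) :
    #{φ : Dual F V | ∀ i, φ (v i) = 0} = Fintype.card F ^ (finrank F V - Fintype.card ι) := by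
  rw [← finrank_span_eq_card hv, ← Subspace.natCard_dualAnnihilator, ← Fintype.card_subtype,
    ← Nat.card_eq_fintype_card]
  refine Nat.card_congr (Equiv.subtypeEquivRight fun φ => ?_)
  simp only [Submodule.mem_dualAnnihilator, ← LinearMap.mem_ker, ← SetLike.le_def,
    Submodule.span_le, Set.range_subset_iff, SetLike.mem_coe]

namespace Projectivization

variable [DecidableEq F]

theorem card_filter_apply_rep_eq_zero (z : ℙ F V) :
    #{φ : Dual F V | φ z.rep = 0} = Fintype.card F ^ (finrank F V - 1) := by
  simpa using Module.Dual.card_filter_forall_apply_eq_zero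
    (linearIndependent_unique_iff.2 z.rep_nonzero : LinearIndependent F fun _ : Unit => z.rep)

theorem card_filter_apply_rep_eq_zero_and {z w : ℙ F V} (h : z ≠ w) :
    #{φ : Dual F V | φ z.rep = 0 ∧ φ w.rep = 0} = Fintype.card F ^ (finrank F V - 2) := by
  simpa [Fin.forall_fin_two] using Module.Dual.card_filter_forall_apply_eq_zero
    (independent_iff.1 ((independent_pair_iff_ne z w).2 h))

section AddCommMonoid

variable {M : Type*} [AddCommMonoid M]

/-- Indexed by functionals rather than hyperplanes, so that `φ = 0` gives the total sum of `D`. -/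
noncomputable def radon (D : ℙ F V → M) (φ : Dual F V) : M :=
  ∑ z with φ z.rep = 0, D z

@[simp]
theorem radon_zero (D : ℙ F V → M) : radon D 0 = ∑ z, D z := by
  simp [radon]

theorem radon_units_smul (D : ℙ F V → M) (φ : Dual F V) (c : Fˣ) :
    radon D (c • φ) = radon D φ := by
  simp only [radon, Units.smul_def, LinearMap.smul_apply, smul_eq_mul, mul_eq_zero, c.ne_zero,
    false_or]

theorem sum_radon (s : Finset (Dual F V)) (D : ℙ F V → M) :
    ∑ φ ∈ s, radon D φ = ∑ z, #{φ ∈ s | φ z.rep = 0} • D z := by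
  unfold radon
  exact sum_sum_filter_eq_sum_card_nsmul s univ (fun φ z => φ z.rep = 0) D

theorem radon_rep_mk (D : ℙ F V → M) (φ : Dual F V) (hφ : φ ≠ 0) :
    radon D (mk F φ hφ).rep = radon D φ := by
  obtain ⟨c, hc⟩ := exists_smul_eq_mk_rep F φ hφ
  rw [← hc, radon_units_smul]

theorem finsum_mem_setOf_rep_apply_rep_eq_zero (D : ℙ F V → M) (H : ℙ F (Dual F V)) :
    ∑ᶠ z ∈ {z : ℙ F V | H.rep z.rep = 0}, D z = radon D H.rep := by
  rw [radon, ← finsum_mem_coe_finset, coe_filter_univ]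

end AddCommMonoid

variable {M : Type*} [AddCommGroup M]

theorem radon_sub (D₁ D₂ : ℙ F V → M) (φ : Dual F V) :
    radon (D₁ - D₂) φ = radon D₁ φ - radon D₂ φ :=
  sum_sub_distrib ..

variable [IsAddTorsionFree M]

theorem sum_eq_zero_of_radon_eq_zero (hV : 2 ≤ finrank F V) {D : ℙ F V → M}
    (hD : ∀ φ : Dual F V, φ ≠ 0 → radon D φ = 0) : ∑ z, D z = 0 := by
  obtain ⟨m, hm⟩ : ∃ m, Fintype.card F ^ (finrank F V - 1) = m + 2 :=
    Nat.exists_eq_add_of_le' (Nat.one_lt_pow (by omega) Fintype.one_lt_card)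
  have h_total : ∑ φ, radon D φ = ∑ z, D z := by
    rw [sum_eq_single 0 (fun φ _ hφ => hD φ hφ) (by simp), radon_zero]
  have h_count : ∑ φ, radon D φ = (m + 2) • ∑ z, D z := by
    simp only [sum_radon, card_filter_apply_rep_eq_zero, hm, smul_sum]
  rw [h_total, succ_nsmul, eq_comm, add_eq_right] at h_count
  exact (nsmul_eq_zero_iff_right m.succ_ne_zero).1 h_count

theorem eq_zero_of_radon_eq_zero (hV : 2 ≤ finrank F V) {D : ℙ F V → M}
    (hD : ∀ φ : Dual F V, φ ≠ 0 → radon D φ = 0) : D = 0 := by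
  classical
  ext z₀
  set q := Fintype.card F
  have hS := sum_eq_zero_of_radon_eq_zero hV hD
  have h_rest : ∑ z ∈ {z₀}ᶜ, D z = -D z₀ := by
    rw [Fintype.sum_eq_add_sum_compl z₀] at hS
    exact eq_neg_of_add_eq_zero_right hS
  have h_vanish : ∑ φ with φ z₀.rep = 0, radon D φ = 0 := by
    refine sum_eq_zero fun φ _ => ?_
    rcases eq_or_ne φ 0 with rfl | hφ
    · rw [radon_zero, hS]
    · exact hD φ hφ
  have h_count : ∑ φ with φ z₀.rep = 0, radon D φ =
      q ^ (finrank F V - 1) • D z₀ + q ^ (finrank F V - 2) • ∑ z ∈ {z₀}ᶜ, D z := by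
    rw [sum_radon, Fintype.sum_eq_add_sum_compl z₀, smul_sum]
    simp only [filter_filter, and_self, card_filter_apply_rep_eq_zero]
    congr 1
    refine sum_congr rfl fun z hz => ?_
    rw [card_filter_apply_rep_eq_zero_and (Ne.symm (by simpa using hz))]
  have h_lt : q ^ (finrank F V - 2) < q ^ (finrank F V - 1) :=
    Nat.pow_lt_pow_right Fintype.one_lt_card (by omega)
  rw [h_vanish, h_rest, smul_neg, ← sub_nsmul _ h_lt.le] at h_count
  exact (nsmul_eq_zero_iff_right (Nat.sub_ne_zero_of_lt h_lt)).1 h_count.symm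

theorem radon_injective (hV : 2 ≤ finrank F V) {D₁ D₂ : ℙ F V → M}
    (h : ∀ H : ℙ F (Dual F V), radon D₁ H.rep = radon D₂ H.rep) : D₁ = D₂ := by
  refine sub_eq_zero.1 (eq_zero_of_radon_eq_zero hV fun φ hφ => ?_)
  rw [radon_sub, ← radon_rep_mk D₁ φ hφ, ← radon_rep_mk D₂ φ hφ, h, sub_self]

end Projectivization

end

/-- Injectivity of the Radon transform on the finite projective space `ℙ^{k-1}(𝔽_q)`:
if two integer-valued functions on the point set have the same sum over every hyperplane
(hyperplanes being points of the projectivized dual space, incidence given by vanishing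
of a representing functional on a representing vector), then they are equal. -/
theorem stmt1 {F : Type*} [Field F] [Fintype F] (k : ℕ) (hk : 2 ≤ k)
    (C₁ C₂ : Projectivization F (Fin k → F) → ℤ)
    (h : ∀ H : Projectivization F (Module.Dual F (Fin k → F)),
      (∑ᶠ x ∈ {z : Projectivization F (Fin k → F) | H.rep z.rep = 0}, C₁ x) =
        ∑ᶠ x ∈ {z : Projectivization F (Fin k → F) | H.rep z.rep = 0}, C₂ x) :
    C₁ = C₂ := by
  classical
  refine Projectivization.radon_injective (by rwa [Module.finrank_fin_fun]) fun H => ?_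
  simpa only [Projectivization.finsum_mem_setOf_rep_apply_rep_eq_zero] using h H
end

section
/- Let C ⊆ 𝔽_2^n be a binary linear code of dimension k ≥ 1, full-length (every coordinate lies in the support of some codeword), such that every nonzero codeword has Hamming weight exactly 2^m for a fixed m. Then n = (2^k − 1) · 2^{m − k + 1}, and in particular k ≤ m + 1. -/
/-!
Count the pairs (codeword, coordinate in its support) in two ways. For each coordinate `i`,
evaluation at `i` is a nonzero functional on `C`, so exactly half of the `2^k` codewords are
nonzero at `i`: the total is `n · 2^(k-1)`. On the other hand it is `(2^k − 1) · 2^m`. Since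
`2^k − 1` is odd, `n · 2^k = (2^k − 1) · 2^(m+1)` forces `2^k ∣ 2^(m+1)`.
-/

open Finset

theorem AddMonoidHom.card_filter_ne_zero_mul_card {G M : Type*} [AddGroup G] [Fintype G]
    [AddMonoid M] [Fintype M] [DecidableEq M] (f : G →+ M) (hf : Function.Surjective f) :
    #{g | f g ≠ 0} * Fintype.card M = Fintype.card G * (Fintype.card M - 1) := by
  set z := #{g | f g = 0}
  have hfiber : ∀ a, #{g | f g = a} = z := fun a =>
    AddMonoidHom.card_fiber_eq_of_mem_range f (hf a) ⟨0, f.map_zero⟩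
  have hG : Fintype.card G = Fintype.card M * z := by
    rw [← card_univ,
      card_eq_sum_card_fiberwise (f := f) (t := univ) (fun _ _ => mem_coe.2 (mem_univ _)),
      sum_congr rfl fun a _ => hfiber a, sum_const, card_univ, smul_eq_mul]
  have hsplit : #{g | f g ≠ 0} + z = Fintype.card G := by
    simpa using card_filter_add_card_filter_not (s := univ) (fun g => f g ≠ 0)
  obtain ⟨q, hq⟩ : ∃ q, Fintype.card M = q + 1 := Nat.exists_eq_add_one.2 Fintype.card_pos
  rw [hq] at hG ⊢
  have hne : #{g | f g ≠ 0} = q * z := by linarith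
  rw [hne, hG, Nat.add_sub_cancel]
  ring

theorem Nat.eq_mul_two_pow_of_mul_two_pow_eq {n k j : ℕ} (h : n * 2 ^ k = (2 ^ k - 1) * 2 ^ j) :
    n = (2 ^ k - 1) * 2 ^ (j - k) ∧ k ≤ j := by
  have hkj : k ≤ j := by
    have hcop : Nat.Coprime (2 ^ k) (2 ^ k - 1) :=
      (Nat.coprime_self_sub_right Nat.one_le_two_pow).mpr (Nat.coprime_one_right _)
    exact (Nat.pow_dvd_pow_iff_le_right one_lt_two).mp
      (hcop.dvd_of_dvd_mul_left ⟨n, by rw [← h, mul_comm]⟩)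
  refine ⟨Nat.eq_of_mul_eq_mul_right (pow_pos two_pos k) ?_, hkj⟩
  rw [h, mul_assoc, ← pow_add, Nat.sub_add_cancel hkj]

section LinearCode

variable {ι K : Type*} [Field K] [DecidableEq K]

theorem Submodule.card_filter_apply_ne_zero_mul_card [Fintype K] (C : Submodule K (ι → K))
    [Fintype C] (i : ι) (hi : ∃ c ∈ C, c i ≠ 0) :
    #{c : C | (c : ι → K) i ≠ 0} * Fintype.card K = Fintype.card C * (Fintype.card K - 1) := by
  set f : Module.Dual K C := (LinearMap.proj i).comp C.subtype
  have hf : f ≠ 0 := by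
    obtain ⟨c, hc, hci⟩ := hi
    exact fun h => hci (LinearMap.congr_fun h ⟨c, hc⟩)
  exact f.toAddMonoidHom.card_filter_ne_zero_mul_card (LinearMap.surjective hf)

variable [Fintype ι]

theorem Submodule.sum_hammingNorm_mul_card [Fintype K] (C : Submodule K (ι → K)) [Fintype C]
    (hfull : ∀ i, ∃ c ∈ C, c i ≠ 0) :
    (∑ c : C, hammingNorm (c : ι → K)) * Fintype.card K
      = Fintype.card ι * (Fintype.card C * (Fintype.card K - 1)) := by
  have hswap :
      ∑ c : C, hammingNorm (c : ι → K) = ∑ i, #{c : C | (c : ι → K) i ≠ 0} := by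
    simp only [hammingNorm, card_filter]
    exact sum_comm
  rw [hswap, sum_mul, sum_congr rfl fun i _ => C.card_filter_apply_ne_zero_mul_card i (hfull i),
    sum_const, card_univ, smul_eq_mul]

theorem Submodule.sum_hammingNorm_of_constant_weight (C : Submodule K (ι → K)) [Fintype C]
    {w : ℕ} (hw : ∀ c ∈ C, c ≠ 0 → hammingNorm c = w) :
    ∑ c : C, hammingNorm (c : ι → K) = (Fintype.card C - 1) * w := by
  rw [← add_sum_erase univ _ (mem_univ 0), Submodule.coe_zero, hammingNorm_zero, zero_add,
    sum_congr rfl fun (c : C) hc => hw c c.2 (by simpa using (mem_erase.mp hc).1), sum_const,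
    card_erase_of_mem (mem_univ _), card_univ, smul_eq_mul]

end LinearCode

theorem stmt3_general (n k m : ℕ) (C : Submodule (ZMod 2) (Fin n → ZMod 2))
    (hk : Module.finrank (ZMod 2) C = k)
    (hfull : ∀ i : Fin n, ∃ c ∈ C, c i ≠ 0)
    (hw : ∀ c ∈ C, c ≠ 0 → hammingNorm c = 2 ^ m) :
    n = (2 ^ k - 1) * 2 ^ (m + 1 - k) ∧ k ≤ m + 1 := by
  have : Fintype C := Fintype.ofFinite C
  have hcard : Fintype.card C = 2 ^ k := by
    rw [Module.card_eq_pow_finrank (K := ZMod 2), ZMod.card, hk]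
  have hcount := C.sum_hammingNorm_mul_card hfull
  rw [C.sum_hammingNorm_of_constant_weight hw, hcard, ZMod.card, Fintype.card_fin] at hcount
  refine Nat.eq_mul_two_pow_of_mul_two_pow_eq ?_
  rw [pow_succ, ← mul_assoc, hcount, Nat.add_one_sub_one, mul_one]

/-- A full-length binary linear code of dimension `k ≥ 1` all of whose nonzero codewords
have Hamming weight exactly `2^m` satisfies `n = (2^k − 1) · 2^(m−k+1)`; in particular
`k ≤ m + 1`. -/
theorem stmt3 (n k m : ℕ) (C : Submodule (ZMod 2) (Fin n → ZMod 2))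
    (hk : Module.finrank (ZMod 2) C = k) (hk1 : 1 ≤ k)
    (hfull : ∀ i : Fin n, ∃ c ∈ C, c i ≠ 0)
    (hw : ∀ c ∈ C, c ≠ 0 → hammingNorm c = 2 ^ m) :
    n = (2 ^ k - 1) * 2 ^ (m + 1 - k) ∧ k ≤ m + 1 :=
  stmt3_general n k m C hk hfull hw
end

section
/- Let K ⊆ 𝔽_2^ν be a binary linear code with ν ≤ 16 such that every nonzero codeword has Hamming weight 8 or 16. Then dim K ≤ 5. Moreover, if K contains the all-ones vector of weight 16 (so ν = 16), then there is a bijection of the 16 coordinates with 𝔽_2^4 under which every codeword of K is the indicator vector of the zero set complement of an affine function; i.e., K is contained in the first-order Reed–Muller code Aff(𝔽_2^4, 𝔽_2) ⊆ 𝔽_2^{𝔽_2^4}. -/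
/-!
Fix a coordinate `i₀` and let `W` be the subcode of `K` vanishing at `i₀`, so that
`dim K ≤ dim W + 1`. A nonzero `w ∈ W` cannot have weight 16, so it has weight 8, i.e. the
character sum `∑ᵢ (-1)^(w i)` vanishes. Reading each coordinate `i` as the functional
`φ i = (w ↦ w i) ∈ W*`, Fourier inversion over `W` turns these vanishing sums into the statement
that every fibre of `φ` has exactly `16 / |W|` points; hence `|W| ≤ 16` and `dim K ≤ 5`. A
surjective linear map `π : 𝔽₂⁴ → W*` has fibres of the same size, so the coordinates can be
matched with `𝔽₂⁴` so that `π ∘ e = φ`. If `K` contains the all-ones word, every `c ∈ K` is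
`c i₀ · 1 + w` with `w ∈ W`, which becomes the affine function `x ↦ c i₀ + π x w`.
Shorter codes are padded with zero coordinates.
-/

open Finset Module

def sgnChar : AddChar (ZMod 2) ℤ where
  toFun a := if a = 0 then 1 else -1
  map_zero_eq_one' := rfl
  map_add_eq_mul' := by decide

lemma sgnChar_apply (a : ZMod 2) : sgnChar a = if a = 0 then 1 else -1 := rfl

lemma sgnChar_sub (a b : ZMod 2) : sgnChar (a - b) = sgnChar a * sgnChar b := by
  revert a b; decide

lemma sum_sgnChar_eq_card_sub_two_mul_hammingNorm {α : Type*} [Fintype α] (c : α → ZMod 2) :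
    ∑ i, sgnChar (c i) = Fintype.card α - 2 * hammingNorm c := by
  have hcard := card_filter_add_card_filter_not (s := univ) (p := fun i => c i = 0)
  rw [card_univ] at hcard
  simp only [sgnChar_apply, sum_ite, sum_const, hammingNorm]
  push_cast [← hcard]
  ring

lemma sum_sgnChar_apply_eq_zero_of_ne_zero {E : Type*} [AddCommGroup E] [Module (ZMod 2) E]
    [Fintype E] {g : Dual (ZMod 2) E} (hg : g ≠ 0) : ∑ x, sgnChar (g x) = 0 := by
  refine (AddChar.sum_eq_zero_iff_ne_zero (ψ := sgnChar.compAddMonoidHom g.toAddMonoidHom)).2 ?_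
  contrapose! hg
  ext x
  have := DFunLike.congr_fun hg x
  simp only [AddChar.compAddMonoidHom_apply, AddChar.zero_apply, LinearMap.toAddMonoidHom_coe,
    sgnChar_apply, ite_eq_left_iff] at this
  simpa using this

lemma exists_linearMap_surjective_of_finrank_le {K V : Type*} [DivisionRing K] [AddCommGroup V]
    [Module K V] [FiniteDimensional K V] {n : ℕ} (h : finrank K V ≤ n) :
    ∃ π : (Fin n → K) →ₗ[K] V, Function.Surjective π :=
  ⟨(finBasis K V).equivFun.symm.toLinearMap ∘ₗ LinearMap.funLeft K K (Fin.castLE h),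
    (finBasis K V).equivFun.symm.surjective.comp
      (LinearMap.funLeft_surjective_of_injective _ _ _ (Fin.castLE_injective h))⟩

theorem exists_equiv_of_card_fiber_eq {α β γ : Type*} [Finite α] [Finite β] {f : α → γ}
    {g : β → γ} (h : ∀ c, Nat.card {a // f a = c} = Nat.card {b // g b = c}) :
    ∃ e : α ≃ β, ∀ a, g (e a) = f a :=
  ⟨Equiv.ofFiberEquiv fun c => (Finite.card_eq.1 (h c)).some, Equiv.ofFiberEquiv_map _⟩

lemma hammingNorm_extend_zero {ι η β : Type*} [Fintype ι] [Fintype η] [Zero β]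
    [DecidableEq β] {s : ι → η} (hs : Function.Injective s) (c : ι → β) :
    hammingNorm (Function.extend s c 0) = hammingNorm c := by
  unfold hammingNorm
  rw [← card_map ⟨s, hs⟩]
  congr 1
  ext j
  simp only [mem_filter, mem_univ, true_and, mem_map, Function.Embedding.coeFn_mk]
  by_cases hj : ∃ i, s i = j
  · obtain ⟨i, rfl⟩ := hj
    simp [hs.extend_apply, hs.eq_iff]
  · simp only [Function.extend_apply' _ _ _ hj, Pi.zero_apply, ne_eq, not_true_eq_false,
      false_iff]
    exact fun ⟨i, _, h⟩ => hj ⟨i, h⟩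

theorem card_fiber_mul_card_of_sum_sgnChar_eq_zero {α W : Type*} [Fintype α] [AddCommGroup W]
    [Module (ZMod 2) W] [Finite W] (φ : α → Dual (ZMod 2) W)
    (hφ : ∀ w ≠ 0, ∑ a, sgnChar (φ a w) = 0) (f : Dual (ZMod 2) W) :
    Nat.card {a // φ a = f} * Nat.card W = Nat.card α := by
  classical
  have := Fintype.ofFinite W
  have inner (a : α) :
      ∑ w, sgnChar ((φ a - f) w) = if φ a = f then (Fintype.card W : ℤ) else 0 := by
    split_ifs with h
    · simp [h]
    · exact sum_sgnChar_apply_eq_zero_of_ne_zero (sub_ne_zero.2 h)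
  have outer (w : W) :
      ∑ a, sgnChar ((φ a - f) w) = if w = 0 then (Fintype.card α : ℤ) else 0 := by
    split_ifs with h
    · simp [h]
    · simp only [LinearMap.sub_apply, sgnChar_sub, ← sum_mul, hφ w h, zero_mul]
  have key : ((Fintype.card {a // φ a = f} * Fintype.card W : ℕ) : ℤ) = Fintype.card α := by
    calc _ = ∑ a, ∑ w, sgnChar ((φ a - f) w) := by
          simp only [inner, sum_ite, sum_const, Fintype.card_subtype]
          push_cast; ring
      _ = ∑ w, ∑ a, sgnChar ((φ a - f) w) := sum_comm
      _ = Fintype.card α := by simp only [outer, sum_ite_eq', mem_univ, if_true]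
  simp only [Nat.card_eq_fintype_card]
  exact_mod_cast key

lemma sum_sgnChar_apply_eq_zero_of_surjective {E W : Type*} [AddCommGroup E] [Module (ZMod 2) E]
    [Fintype E] [AddCommGroup W] [Module (ZMod 2) W] {π : E →ₗ[ZMod 2] Dual (ZMod 2) W}
    (hπ : Function.Surjective π) {w : W} (hw : w ≠ 0) : ∑ x, sgnChar (π x w) = 0 := by
  obtain ⟨g, hg⟩ : ∃ g : Dual (ZMod 2) W, g w ≠ 0 := by
    simpa using (Module.forall_dual_apply_eq_zero_iff (ZMod 2) w).not.2 hw
  obtain ⟨x, rfl⟩ := hπ g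
  refine sum_sgnChar_apply_eq_zero_of_ne_zero (g := π.flip w) fun h => hg ?_
  exact LinearMap.congr_fun h x

section SubcodeVanishingAt

variable {α : Type*} (K : Submodule (ZMod 2) (α → ZMod 2)) (i₀ : α)

def subcodeVanishingAt : Submodule (ZMod 2) K :=
  LinearMap.ker ((LinearMap.proj i₀).comp K.subtype)

def coordFunctional (i : α) : Dual (ZMod 2) (subcodeVanishingAt K i₀) :=
  (LinearMap.proj i).comp (K.subtype.comp (subcodeVanishingAt K i₀).subtype)

lemma coordFunctional_apply (i : α) (w : subcodeVanishingAt K i₀) :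
    coordFunctional K i₀ i w = (w : α → ZMod 2) i := rfl

lemma finrank_le_finrank_subcodeVanishingAt_add_one [Finite α] :
    finrank (ZMod 2) K ≤ finrank (ZMod 2) (subcodeVanishingAt K i₀) + 1 := by
  have hrank := LinearMap.finrank_range_add_finrank_ker ((LinearMap.proj i₀).comp K.subtype)
  have hrange : finrank (ZMod 2) (LinearMap.range ((LinearMap.proj i₀).comp K.subtype)) ≤ 1 :=
    (Submodule.finrank_le _).trans_eq (finrank_self _)
  unfold subcodeVanishingAt
  omega

variable {K}

lemma sum_sgnChar_coordFunctional_eq_zero [Fintype α] (hα : Fintype.card α = 16)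
    (hw : ∀ c ∈ K, c ≠ 0 → hammingNorm c = 8 ∨ hammingNorm c = 16)
    {w : subcodeVanishingAt K i₀} (hw0 : w ≠ 0) :
    ∑ i, sgnChar (coordFunctional K i₀ i w) = 0 := by
  have hc0 : (w : α → ZMod 2) ≠ 0 := by simpa using hw0
  have hci₀ : (w : α → ZMod 2) i₀ = 0 := w.2
  have hlt : hammingNorm (w : α → ZMod 2) < 16 := by
    rw [← hα]
    exact card_lt_card (filter_ssubset.2 ⟨i₀, mem_univ _, not_not.2 hci₀⟩)
  have h8 : hammingNorm (w : α → ZMod 2) = 8 := by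
    have := hw _ (w : K).2 hc0
    omega
  simp only [coordFunctional_apply, sum_sgnChar_eq_card_sub_two_mul_hammingNorm, hα, h8]
  norm_num

lemma card_fiber_coordFunctional_mul_card [Fintype α] (hα : Fintype.card α = 16)
    (hw : ∀ c ∈ K, c ≠ 0 → hammingNorm c = 8 ∨ hammingNorm c = 16)
    (f : Dual (ZMod 2) (subcodeVanishingAt K i₀)) :
    Nat.card {i // coordFunctional K i₀ i = f} * Nat.card (subcodeVanishingAt K i₀) = 16 := by
  rw [card_fiber_mul_card_of_sum_sgnChar_eq_zero _
    (fun _ => sum_sgnChar_coordFunctional_eq_zero i₀ hα hw), Nat.card_eq_fintype_card, hα]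

lemma finrank_subcodeVanishingAt_le_four [Fintype α] (hα : Fintype.card α = 16)
    (hw : ∀ c ∈ K, c ≠ 0 → hammingNorm c = 8 ∨ hammingNorm c = 16) :
    finrank (ZMod 2) (subcodeVanishingAt K i₀) ≤ 4 := by
  have hfiber := card_fiber_coordFunctional_mul_card i₀ hα hw (coordFunctional K i₀ i₀)
  have hpos : 0 < Nat.card {i // coordFunctional K i₀ i = coordFunctional K i₀ i₀} :=
    Finite.card_pos_iff.2 ⟨⟨i₀, rfl⟩⟩
  have hcard : 2 ^ finrank (ZMod 2) (subcodeVanishingAt K i₀) ≤ 2 ^ 4 := by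
    have := Module.natCard_eq_pow_finrank (K := ZMod 2) (V := subcodeVanishingAt K i₀)
    rw [Nat.card_zmod] at this
    nlinarith
  exact (Nat.pow_le_pow_iff_right (by norm_num)).1 hcard

end SubcodeVanishingAt

theorem finrank_le_five_of_hammingNorm_eq_eight_or_sixteen {α : Type*} [Fintype α]
    (hα : Fintype.card α = 16) (K : Submodule (ZMod 2) (α → ZMod 2))
    (hw : ∀ c ∈ K, c ≠ 0 → hammingNorm c = 8 ∨ hammingNorm c = 16) :
    finrank (ZMod 2) K ≤ 5 := by
  obtain ⟨i₀⟩ : Nonempty α := Fintype.card_pos_iff.1 (by omega)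
  have := finrank_le_finrank_subcodeVanishingAt_add_one K i₀
  have := finrank_subcodeVanishingAt_le_four i₀ hα hw
  omega

theorem exists_equiv_affine_of_hammingNorm_eq_eight_or_sixteen {α : Type*} [Fintype α]
    (hα : Fintype.card α = 16) (K : Submodule (ZMod 2) (α → ZMod 2))
    (hw : ∀ c ∈ K, c ≠ 0 → hammingNorm c = 8 ∨ hammingNorm c = 16)
    (h1 : (fun _ => 1 : α → ZMod 2) ∈ K) :
    ∃ e : α ≃ (Fin 4 → ZMod 2), ∀ c ∈ K, ∃ (a : ZMod 2)
      (ℓ : (Fin 4 → ZMod 2) →ₗ[ZMod 2] ZMod 2), ∀ x, c (e.symm x) = a + ℓ x := by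
  obtain ⟨i₀⟩ : Nonempty α := Fintype.card_pos_iff.1 (by omega)
  obtain ⟨π, hπ⟩ := exists_linearMap_surjective_of_finrank_le (n := 4)
    (V := Dual (ZMod 2) (subcodeVanishingAt K i₀))
    (by rw [Subspace.dual_finrank_eq]; exact finrank_subcodeVanishingAt_le_four i₀ hα hw)
  have hπfiber (f : Dual (ZMod 2) (subcodeVanishingAt K i₀)) :
      Nat.card {x // π x = f} * Nat.card (subcodeVanishingAt K i₀) = 16 := by
    rw [card_fiber_mul_card_of_sum_sgnChar_eq_zero _
      (fun _ => sum_sgnChar_apply_eq_zero_of_surjective hπ)]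
    simp
  obtain ⟨e, he⟩ := exists_equiv_of_card_fiber_eq (f := coordFunctional K i₀) (g := π)
    fun f => Nat.eq_of_mul_eq_mul_right Nat.card_pos
      ((card_fiber_coordFunctional_mul_card i₀ hα hw f).trans (hπfiber f).symm)
  refine ⟨e, fun c hc => ⟨c i₀, π.flip ⟨⟨c, hc⟩ - c i₀ • ⟨_, h1⟩, ?_⟩, fun x => ?_⟩⟩
  · simp [subcodeVanishingAt]
  · rw [LinearMap.flip_apply, ← e.apply_symm_apply x, he, coordFunctional_apply]
    simp

/-- A binary linear code `K ⊆ 𝔽_2^ν` with `ν ≤ 16` and all nonzero weights in `{8, 16}`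
has dimension at most `5`.  Moreover, if `K` contains the all-ones vector and this has
weight `16`, then `ν = 16` and there is a bijection of the coordinates with `𝔽_2^4`
under which every codeword of `K` is (the vector of values of) an affine function
`𝔽_2^4 → 𝔽_2`, i.e. `K` is contained in the first-order Reed–Muller (Kummer) code. -/
theorem stmt5 (ν : ℕ) (hν : ν ≤ 16) (K : Submodule (ZMod 2) (Fin ν → ZMod 2))
    (hw : ∀ c ∈ K, c ≠ 0 → hammingNorm c = 8 ∨ hammingNorm c = 16) :
    Module.finrank (ZMod 2) K ≤ 5 ∧
      (((fun _ => 1) : Fin ν → ZMod 2) ∈ K →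
        hammingNorm ((fun _ => 1) : Fin ν → ZMod 2) = 16 →
        ν = 16 ∧ ∃ e : Fin ν ≃ (Fin 4 → ZMod 2), ∀ c ∈ K,
          ∃ (a : ZMod 2) (ℓ : (Fin 4 → ZMod 2) →ₗ[ZMod 2] ZMod 2),
            ∀ x : Fin 4 → ZMod 2, c (e.symm x) = a + ℓ x) := by
  refine ⟨?_, fun h1 hnorm => ?_⟩
  · have hs := Fin.castLE_injective hν
    let E := Function.ExtendByZero.linearMap (ZMod 2) (Fin.castLE hν)
    rw [(Submodule.equivMapOfInjective E (Function.extend_injective hs 0) K).finrank_eq]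
    refine finrank_le_five_of_hammingNorm_eq_eight_or_sixteen (Fintype.card_fin 16) _ ?_
    rintro _ ⟨c, hc, rfl⟩ hc0
    rw [show hammingNorm (E c) = hammingNorm c from hammingNorm_extend_zero hs c]
    exact hw c hc (by rintro rfl; exact hc0 (map_zero E))
  · obtain rfl : ν = 16 := by simpa [hammingNorm] using hnorm
    exact ⟨rfl,
      exists_equiv_affine_of_hammingNorm_eq_eight_or_sixteen (Fintype.card_fin 16) K hw h1⟩
end

section
/- Let C ⊆ 𝔽_2^n be a full-length binary linear code of dimension k with all nonzero weights in {16, 20} and satisfying k ≥ n − 26. Then n ≤ 31 and k ≤ 5. Moreover, if n = 31 (and hence k = 5), every nonzero codeword has weight 16. -/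
/-!
Every coordinate of a full-length binary linear code with `2 ^ k` words is `1` on exactly half
of the codewords, and two coordinates are simultaneously `1` on at least a quarter of them (this
is the nonnegativity of the number of dual words of weight `2`). Hence `∑ w = n 2 ^ (k - 1)` and
`∑ w ^ 2 ≥ n (n + 1) 2 ^ (k - 2)`. If all nonzero weights lie in `{a, b}`, then
`∑ (w - a) (w - b) = a b`, and for `{16, 20}` the two moments give
`2 ^ k (n ^ 2 - 71 n + 1280) ≤ 1280`, which together with `n ≤ k + 26` leaves `n ≤ 31`.
The first moment also counts the words of weight `20`: `8 A₂₀ = n 2 ^ k - 32 (2 ^ k - 1)`,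
so `k ≤ 5` once `n ≤ 31`, and `A₂₀ = 0` when `n = 31`.
-/

open Finset

namespace AddMonoidHom

variable {V : Type*} [AddCommGroup V] [Fintype V]

theorem two_mul_sum_val_eq_card (f : V →+ ZMod 2) (hf : f ≠ 0) :
    2 * ∑ v, (f v).val = Fintype.card V := by
  obtain ⟨v₀, hv₀⟩ : ∃ v₀, f v₀ = 1 := by
    by_contra! h
    exact hf (AddMonoidHom.ext fun v => (by decide : ∀ a : ZMod 2, a ≠ 1 → a = 0) _ (h v))
  -- translation by `v₀` exchanges the level sets `f = 0` and `f = 1`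
  have htranslate : ∑ v, (f (v + v₀)).val = ∑ v, (f v).val :=
    Fintype.sum_equiv (Equiv.addRight v₀) _ _ fun _ => rfl
  calc 2 * ∑ v, (f v).val = ∑ v, ((f v).val + (f (v + v₀)).val) := by
        rw [two_mul, sum_add_distrib, htranslate]
    _ = ∑ _v : V, 1 := sum_congr rfl fun v _ => by
        rw [map_add, hv₀]
        exact (by decide : ∀ a : ZMod 2, a.val + (a + 1).val = 1) _
    _ = Fintype.card V := by simp

theorem two_mul_sum_val_le_card (f : V →+ ZMod 2) : 2 * ∑ v, (f v).val ≤ Fintype.card V := by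
  rcases eq_or_ne f 0 with rfl | hf
  · simp
  · exact (two_mul_sum_val_eq_card f hf).le

end AddMonoidHom

theorem ZMod.hammingNorm_eq_sum_val {ι : Type*} [Fintype ι] (x : ι → ZMod 2) :
    hammingNorm x = ∑ i, (x i).val := by
  rw [hammingNorm, card_filter]
  exact sum_congr rfl fun i _ => (by decide : ∀ a : ZMod 2, (if a ≠ 0 then 1 else 0) = a.val) _

namespace Submodule

variable {ι : Type*} (C : Submodule (ZMod 2) (ι → ZMod 2)) [Fintype C]

theorem two_mul_sum_val_apply_eq_card {i : ι} (hi : ∃ c ∈ C, c i ≠ 0) :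
    2 * ∑ c : C, (c.1 i).val = Fintype.card C := by
  obtain ⟨c, hc, hci⟩ := hi
  refine (LinearMap.proj i ∘ₗ C.subtype).toAddMonoidHom.two_mul_sum_val_eq_card fun h => hci ?_
  exact DFunLike.congr_fun h ⟨c, hc⟩

theorem two_mul_sum_val_apply_add_le_card (i j : ι) :
    2 * ∑ c : C, (c.1 i + c.1 j).val ≤ Fintype.card C :=
  AddMonoidHom.two_mul_sum_val_le_card
    (LinearMap.proj i ∘ₗ C.subtype + LinearMap.proj j ∘ₗ C.subtype).toAddMonoidHom

theorem card_le_four_mul_sum_val_apply_mul [DecidableEq ι] (hfull : ∀ i, ∃ c ∈ C, c i ≠ 0)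
    (i j : ι) :
    (if i = j then 2 else 1) * Fintype.card C ≤ 4 * ∑ c : C, (c.1 i).val * (c.1 j).val := by
  have hpair : 2 * (2 * ∑ c : C, (c.1 i).val * (c.1 j).val) + 2 * ∑ c : C, (c.1 i + c.1 j).val
      = 2 * ∑ c : C, (c.1 i).val + 2 * ∑ c : C, (c.1 j).val := by
    simp only [mul_sum, ← sum_add_distrib]
    refine sum_congr rfl fun c _ => ?_
    have := (by decide : ∀ a b : ZMod 2, 2 * (a.val * b.val) + (a + b).val = a.val + b.val)
      (c.1 i) (c.1 j)
    omega
  rw [two_mul_sum_val_apply_eq_card C (hfull i), two_mul_sum_val_apply_eq_card C (hfull j)] at hpair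
  split_ifs with hij
  · subst hij
    have hdiag : ∀ c : C, (c.1 i + c.1 i).val = 0 := fun c =>
      (by decide : ∀ a : ZMod 2, (a + a).val = 0) _
    simp only [hdiag, sum_const_zero] at hpair
    omega
  · have := two_mul_sum_val_apply_add_le_card C i j
    omega

variable [Fintype ι]

theorem two_mul_sum_hammingNorm (hfull : ∀ i, ∃ c ∈ C, c i ≠ 0) :
    2 * ∑ c : C, hammingNorm c.1 = Fintype.card ι * Fintype.card C := by
  simp only [ZMod.hammingNorm_eq_sum_val]
  rw [sum_comm, mul_sum, sum_congr rfl fun i _ => two_mul_sum_val_apply_eq_card C (hfull i)]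
  simp

theorem card_mul_le_four_mul_sum_hammingNorm_sq (hfull : ∀ i, ∃ c ∈ C, c i ≠ 0) :
    Fintype.card ι * (Fintype.card ι + 1) * Fintype.card C
      ≤ 4 * ∑ c : C, hammingNorm c.1 ^ 2 := by
  classical
  have hcount : ∑ i : ι, ∑ j : ι, (if i = j then 2 else 1)
      = Fintype.card ι * (Fintype.card ι + 1) := by
    have h : ∀ i j : ι, (if i = j then 2 else 1) = 1 + if i = j then 1 else 0 := fun i j => by
      split_ifs <;> rfl
    simp only [h, sum_add_distrib, sum_ite_eq, mem_univ, if_true, sum_const, card_univ,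
      smul_eq_mul]
    ring
  have hexpand : 4 * ∑ c : C, hammingNorm c.1 ^ 2
      = ∑ i : ι, ∑ j : ι, 4 * ∑ c : C, (c.1 i).val * (c.1 j).val := by
    have hsq : ∀ c : C, hammingNorm c.1 ^ 2 = ∑ i : ι, ∑ j : ι, (c.1 i).val * (c.1 j).val :=
      fun c => by rw [ZMod.hammingNorm_eq_sum_val, sq, sum_mul_sum]
    simp only [hsq, mul_sum]
    rw [sum_comm]
    exact sum_congr rfl fun i _ => sum_comm
  rw [hexpand, ← hcount, sum_mul]
  exact sum_le_sum fun i _ => by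
    rw [sum_mul]
    exact sum_le_sum fun j _ => card_le_four_mul_sum_val_apply_mul C hfull i j

theorem sum_hammingNorm_sub_mul_sub {a b : ℕ}
    (hw : ∀ c ∈ C, c ≠ 0 → hammingNorm c = a ∨ hammingNorm c = b) :
    ∑ c : C, ((hammingNorm c.1 : ℤ) - a) * ((hammingNorm c.1 : ℤ) - b) = a * b := by
  rw [sum_eq_single 0]
  · simp
  · intro c _ hc
    rcases hw c.1 c.2 (by simpa using hc) with h | h <;> simp [h]
  · simp

theorem sum_hammingNorm_eq_of_hammingNorm_eq_or_eq {a b : ℕ} (hb : b ≠ 0)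
    (hw : ∀ c ∈ C, c ≠ 0 → hammingNorm c = a ∨ hammingNorm c = b) :
    ∑ c : C, (hammingNorm c.1 : ℤ)
      = a * (Fintype.card C - 1) + (b - a) * #{c : C | hammingNorm c.1 = b} := by
  have hpt : ∀ c : C, (hammingNorm c.1 : ℤ)
      = a + (b - a) * (if hammingNorm c.1 = b then 1 else 0)
        - (if c = 0 then (a : ℤ) else 0) := by
    intro c
    rcases eq_or_ne c 0 with rfl | hc
    · simp [hb.symm]
    · rcases hw c.1 c.2 (by simpa using hc) with h | h <;> split_ifs <;> simp_all
  simp only [hpt, sum_sub_distrib, sum_add_distrib, ← mul_sum, sum_boole, sum_ite_eq', mem_univ,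
    if_true, sum_const, card_univ, nsmul_eq_mul]
  ring

theorem card_mul_card_eq_of_hammingNorm_eq_or_eq {a b : ℕ} (hfull : ∀ i, ∃ c ∈ C, c i ≠ 0)
    (hb : b ≠ 0)
    (hw : ∀ c ∈ C, c ≠ 0 → hammingNorm c = a ∨ hammingNorm c = b) :
    (Fintype.card ι * Fintype.card C : ℤ)
      = 2 * a * (Fintype.card C - 1) + 2 * (b - a) * #{c : C | hammingNorm c.1 = b} := by
  have h := two_mul_sum_hammingNorm C hfull
  zify at h
  rw [← h, sum_hammingNorm_eq_of_hammingNorm_eq_or_eq C hb hw]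
  ring

theorem card_mul_le_of_hammingNorm_eq_or_eq {a b : ℕ}
    (hfull : ∀ i, ∃ c ∈ C, c i ≠ 0)
    (hw : ∀ c ∈ C, c ≠ 0 → hammingNorm c = a ∨ hammingNorm c = b) :
    (Fintype.card C : ℤ) * (Fintype.card ι * (Fintype.card ι + 1)
      - 2 * (a + b) * Fintype.card ι + 4 * a * b) ≤ 4 * a * b := by
  have h1 : (2 * ∑ c : C, (hammingNorm c.1 : ℤ)) = Fintype.card ι * Fintype.card C := by
    exact_mod_cast two_mul_sum_hammingNorm C hfull
  have h2 : (Fintype.card ι * (Fintype.card ι + 1) * Fintype.card C : ℤ)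
      ≤ 4 * ∑ c : C, (hammingNorm c.1 : ℤ) ^ 2 := by
    exact_mod_cast card_mul_le_four_mul_sum_hammingNorm_sq C hfull
  have hexp : ∀ c : C, ((hammingNorm c.1 : ℤ) - a) * ((hammingNorm c.1 : ℤ) - b)
      = (hammingNorm c.1 : ℤ) ^ 2 - (a + b) * hammingNorm c.1 + a * b := fun c => by ring
  have h3 := sum_hammingNorm_sub_mul_sub C hw
  rw [sum_congr rfl fun c _ => hexp c, sum_add_distrib, sum_sub_distrib, ← mul_sum, sum_const,
    card_univ, nsmul_eq_mul] at h3
  nlinarith [h1, h2, h3]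

end Submodule

theorem le_31_of_two_pow_mul_le {n k : ℕ} (hB : n ≤ k + 26)
    (h : (2 : ℤ) ^ k * (n * (n + 1) - 72 * n + 1280) ≤ 1280) : n ≤ 31 := by
  by_contra! hn
  have hk : 6 ≤ k := by omega
  -- `n * (n + 1) - 72 * n + 1280 = (n - 35) * (n - 36) + 20`
  have hq : (20 : ℤ) ≤ n * (n + 1) - 72 * n + 1280 := by
    rcases le_or_gt n 35 with h35 | h36 <;> nlinarith
  have hk6 : k ≤ 6 := by
    have : (2 : ℤ) ^ k ≤ 2 ^ 6 := by nlinarith [pow_pos (two_pos : (0 : ℤ) < 2) k]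
    exact (Nat.pow_le_pow_iff_right (by norm_num : 1 < 2)).mp (by exact_mod_cast this)
  obtain rfl : k = 6 := le_antisymm hk6 hk
  obtain rfl : n = 32 := by omega
  norm_num at h

/-- A full-length binary linear code of dimension `k` with all nonzero weights in
`{16, 20}` and satisfying the B-inequality `k ≥ n − 26` has `n ≤ 31` and `k ≤ 5`;
moreover if `n = 31` then every nonzero codeword has weight `16`. -/
theorem stmt8 (n k : ℕ) (C : Submodule (ZMod 2) (Fin n → ZMod 2))
    (hk : Module.finrank (ZMod 2) C = k)
    (hfull : ∀ i : Fin n, ∃ c ∈ C, c i ≠ 0)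
    (hw : ∀ c ∈ C, c ≠ 0 → hammingNorm c = 16 ∨ hammingNorm c = 20)
    (hB : n ≤ k + 26) :
    n ≤ 31 ∧ k ≤ 5 ∧ (n = 31 → ∀ c ∈ C, c ≠ 0 → hammingNorm c = 16) := by
  classical
  have hcard : Fintype.card C = 2 ^ k := by
    rw [Module.card_eq_pow_finrank (K := ZMod 2), ZMod.card, hk]
  have hN := C.card_mul_card_eq_of_hammingNorm_eq_or_eq hfull (by norm_num) hw
  have hquad := C.card_mul_le_of_hammingNorm_eq_or_eq hfull hw
  simp only [Fintype.card_fin, hcard] at hN hquad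
  push_cast at hN hquad
  have hn : n ≤ 31 := le_31_of_two_pow_mul_le hB (by linarith)
  have hk5 : k ≤ 5 := by
    have : (2 : ℤ) ^ k ≤ 2 ^ 5 := by
      nlinarith [(by exact_mod_cast hn : (n : ℤ) ≤ 31), pow_pos (two_pos : (0 : ℤ) < 2) k]
    exact (Nat.pow_le_pow_iff_right (by norm_num : 1 < 2)).mp (by exact_mod_cast this)
  refine ⟨hn, hk5, fun hn31 c hc hc0 => (hw c hc hc0).resolve_right fun h20 => ?_⟩
  obtain rfl : k = 5 := by omega
  have hN0 : #{c : C | hammingNorm c.1 = 20} = 0 := by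
    have : (#{c : C | hammingNorm c.1 = 20} : ℤ) = 0 := by
      linarith [(by exact_mod_cast hn31 : (n : ℤ) = 31)]
    exact_mod_cast this
  exact card_ne_zero_of_mem (mem_filter.mpr ⟨mem_univ ⟨c, hc⟩, h20⟩) hN0
end

section
/- Let K ⊆ 𝔽_2^ν be a binary linear code with ν ≤ 28 whose nonzero weights all lie in {16, 20}, and suppose some codeword has weight 20. Then dim K ≤ 2. Moreover, if dim K = 2, then the weight multiset of the three nonzero codewords is either {20, 20, 16} (in which case the effective length of K is 28) or {20, 16, 16} (in which case the effective length of K is 26). -/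
open Finset
open scoped symmDiff
namespace Stmt9Aux
variable {ν : ℕ}

def supp (c : Fin ν → ZMod 2) : Finset (Fin ν) := {i | c i ≠ 0}

lemma norm_eq (c : Fin ν → ZMod 2) : hammingNorm c = (supp c).card := rfl

lemma mem_supp {c : Fin ν → ZMod 2} {i : Fin ν} : i ∈ supp c ↔ c i ≠ 0 := by
  simp [supp]

lemma supp_add (u w : Fin ν → ZMod 2) : supp (u + w) = supp u ∆ supp w := by
  ext i
  simp only [supp, mem_filter, mem_univ, true_and, Finset.mem_symmDiff, Pi.add_apply]
  have : ∀ x y : ZMod 2, x + y ≠ 0 ↔ (x ≠ 0 ∧ ¬ y ≠ 0 ∨ y ≠ 0 ∧ ¬ x ≠ 0) := by decide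
  exact this _ _

lemma card_symmDiff' (s t : Finset (Fin ν)) : (s ∆ t).card + (s ∩ t).card = (s ∪ t).card := by
  rw [← card_union_of_disjoint]
  · congr 1
    ext i
    simp only [Finset.mem_symmDiff, mem_union, mem_inter]
    tauto
  · intro x hx hst
    simp only [le_eq_subset, bot_eq_empty, subset_empty, eq_empty_iff_forall_notMem] at *
    intro a ha
    have h1 := hx ha
    have h2 := hst ha
    rw [Finset.mem_symmDiff] at h1
    rw [mem_inter] at h2
    tauto

lemma card_symmDiff'' (s t : Finset (Fin ν)) : (s ∆ t).card = (s \ t).card + (t \ s).card := by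
  rw [symmDiff_def]
  exact card_union_of_disjoint (disjoint_sdiff_sdiff)

lemma add_eq_zero_iff (u w : Fin ν → ZMod 2) : u + w = 0 ↔ u = w := by
  constructor
  · intro h
    funext i
    have := congrFun h i
    revert this
    have : ∀ x y : ZMod 2, x + y = 0 → x = y := by decide
    exact this _ _
  · rintro rfl
    funext i
    exact (by decide : ∀ x : ZMod 2, x + x = 0) _

/-- key per-codeword dichotomy -/
lemma step1 (hν : ν ≤ 28) (v u : Fin ν → ZMod 2) (hv : (supp v).card = 20)
    (hu : hammingNorm u = 16 ∨ hammingNorm u = 20)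
    (huv : hammingNorm (u + v) = 16 ∨ hammingNorm (u + v) = 20) :
    ((supp u \ supp v).card = 6 ∧ hammingNorm u = 16 ∧ hammingNorm (u + v) = 16) ∨
    ((supp u \ supp v).card = 8 ∧ hammingNorm u + hammingNorm (u + v) = 36) := by
  have e1 : (supp u ∩ supp v).card + (supp u \ supp v).card = (supp u).card :=
    card_inter_add_card_sdiff _ _
  have e2 : hammingNorm (u + v) = (supp u \ supp v).card + (supp v \ supp u).card := by
    rw [norm_eq, supp_add, card_symmDiff'']
  have e3 : (supp v ∩ supp u).card + (supp v \ supp u).card = 20 := by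
    rw [card_inter_add_card_sdiff, hv]
  have e4 : supp v ∩ supp u = supp u ∩ supp v := inter_comm _ _
  rw [e4] at e3
  have e5 : (supp u \ supp v).card + 20 ≤ ν := by
    have := card_le_card (subset_univ ((supp u \ supp v) ∪ supp v))
    rw [card_union_of_disjoint sdiff_disjoint, hv, card_univ, Fintype.card_fin] at this
    exact this
  rw [norm_eq u] at hu ⊢
  omega

lemma symmdiff_small (B1 B2 : Finset (Fin ν)) (h : (B1 ∪ B2).card ≤ 8)
    (h1 : 6 ≤ B1.card) (h2 : 6 ≤ B2.card) : (B1 ∆ B2).card ≤ 4 := by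
  have e := card_symmDiff' B1 B2
  have e2 := Finset.card_union_add_card_inter B1 B2
  omega

lemma sdiff_symmDiff (s t A : Finset (Fin ν)) : (s ∆ t) \ A = (s \ A) ∆ (t \ A) := by
  ext i
  simp only [Finset.mem_symmDiff, mem_sdiff]
  tauto

end Stmt9Aux

open Stmt9Aux

/-- A binary linear code `K ⊆ 𝔽_2^ν` with `ν ≤ 28`, nonzero weights in `{16, 20}`, and
containing a codeword of weight `20`, has dimension at most `2`; if the dimension is `2`,
then either there are two codewords of weight `20` and one of weight `16` and the
effective length is `28`, or one of weight `20` and two of weight `16` and the effective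
length is `26`. -/
theorem stmt9 (ν : ℕ) (hν : ν ≤ 28) (K : Submodule (ZMod 2) (Fin ν → ZMod 2))
    (hw : ∀ c ∈ K, c ≠ 0 → hammingNorm c = 16 ∨ hammingNorm c = 20)
    (h20 : ∃ c ∈ K, hammingNorm c = 20) :
    Module.finrank (ZMod 2) K ≤ 2 ∧
      (Module.finrank (ZMod 2) K = 2 →
        ((Nat.card {c : Fin ν → ZMod 2 // c ∈ K ∧ hammingNorm c = 20} = 2 ∧
          Nat.card {c : Fin ν → ZMod 2 // c ∈ K ∧ hammingNorm c = 16} = 1 ∧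
          Nat.card {i : Fin ν // ∃ c ∈ K, c i ≠ 0} = 28) ∨
         (Nat.card {c : Fin ν → ZMod 2 // c ∈ K ∧ hammingNorm c = 20} = 1 ∧
          Nat.card {c : Fin ν → ZMod 2 // c ∈ K ∧ hammingNorm c = 16} = 2 ∧
          Nat.card {i : Fin ν // ∃ c ∈ K, c i ≠ 0} = 26))) := by
  obtain ⟨v, hvK, hv20⟩ := h20
  have hvcard : (supp v).card = 20 := hv20
  have hv0 : v ≠ 0 := by
    intro h; rw [h, hammingNorm_zero] at hv20; omega
  have key : ∀ u ∈ K, u ≠ 0 → u ≠ v →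
      ((supp u \ supp v).card = 6 ∧ hammingNorm u = 16 ∧ hammingNorm (u + v) = 16) ∨
      ((supp u \ supp v).card = 8 ∧ hammingNorm u + hammingNorm (u + v) = 36) := by
    intro u huK hu0 huv
    refine step1 hν v u hvcard (hw u huK hu0) (hw _ (K.add_mem huK hvK) ?_)
    intro h; exact huv ((add_eq_zero_iff u v).mp h)
  have keyb : ∀ u ∈ K, u ≠ 0 → u ≠ v → 6 ≤ (supp u \ supp v).card := by
    intro u h1 h2 h3
    rcases key u h1 h2 h3 with ⟨h, _⟩ | ⟨h, _⟩ <;> omega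
  have pair : ∀ u1 ∈ K, ∀ u2 ∈ K, u1 ≠ 0 → u1 ≠ v → u2 ≠ 0 → u2 ≠ v →
      u1 = u2 ∨ u1 = u2 + v := by
    intro u1 h1K u2 h2K h10 h1v h20' h2v
    by_contra hcon
    push_neg at hcon
    obtain ⟨hne, hnev⟩ := hcon
    have hwK : u1 + u2 ∈ K := K.add_mem h1K h2K
    have hw0 : u1 + u2 ≠ 0 := fun h => hne ((add_eq_zero_iff _ _).mp h)
    have hwv : u1 + u2 ≠ v := by
      intro h
      apply hnev
      calc u1 = u1 + (u2 + u2) := by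
                rw [(add_eq_zero_iff u2 u2).mpr rfl, add_zero]
        _ = (u1 + u2) + u2 := by rw [add_assoc]
        _ = v + u2 := by rw [h]
        _ = u2 + v := add_comm _ _
    have b1 := keyb u1 h1K h10 h1v
    have b2 := keyb u2 h2K h20' h2v
    have b3 := keyb _ hwK hw0 hwv
    have hsupp : supp (u1 + u2) \ supp v = (supp u1 \ supp v) ∆ (supp u2 \ supp v) := by
      rw [supp_add, sdiff_symmDiff]
    have hsmall : ((supp u1 \ supp v) ∪ (supp u2 \ supp v)).card ≤ 8 := by
      have hd : Disjoint ((supp u1 \ supp v) ∪ (supp u2 \ supp v)) (supp v) :=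
        disjoint_union_left.mpr ⟨sdiff_disjoint, sdiff_disjoint⟩
      have := card_le_card
        (subset_univ (((supp u1 \ supp v) ∪ (supp u2 \ supp v)) ∪ supp v))
      rw [card_union_of_disjoint hd, hvcard, card_univ, Fintype.card_fin] at this
      omega
    have := symmdiff_small _ _ hsmall b1 b2
    rw [hsupp] at b3
    omega
  -- Nat.card conversions
  have hc20 : Nat.card {c : Fin ν → ZMod 2 // c ∈ K ∧ hammingNorm c = 20}
      = ({c | c ∈ K ∧ hammingNorm c = 20} : Set (Fin ν → ZMod 2)).ncard :=
    Nat.card_coe_set_eq _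
  have hc16 : Nat.card {c : Fin ν → ZMod 2 // c ∈ K ∧ hammingNorm c = 16}
      = ({c | c ∈ K ∧ hammingNorm c = 16} : Set (Fin ν → ZMod 2)).ncard :=
    Nat.card_coe_set_eq _
  have hcE : Nat.card {i : Fin ν // ∃ c ∈ K, c i ≠ 0}
      = ({i | ∃ c ∈ K, c i ≠ 0} : Set (Fin ν)).ncard :=
    Nat.card_coe_set_eq _
  by_cases hU : ∃ u ∈ K, u ≠ 0 ∧ u ≠ v
  · obtain ⟨u, huK, hu0, huv⟩ := hU
    have hKset : (K : Set (Fin ν → ZMod 2)) = {0, v, u, u + v} := by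
      ext c
      simp only [Set.mem_insert_iff, Set.mem_singleton_iff, SetLike.mem_coe]
      constructor
      · intro hcK
        by_cases hc0 : c = 0; · tauto
        by_cases hcv : c = v; · tauto
        rcases pair c hcK u huK hc0 hcv hu0 huv with h | h <;> tauto
      · rintro (rfl | rfl | rfl | rfl)
        exacts [K.zero_mem, hvK, huK, K.add_mem huK hvK]
    have hrank : Module.finrank (ZMod 2) K ≤ 2 := by
      have hspan : K = Submodule.span (ZMod 2) (({v, u} : Finset (Fin ν → ZMod 2)) : Set _) := by
        apply le_antisymm
        · intro x hx
          rw [← SetLike.mem_coe, hKset] at hx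
          have hvmem : v ∈ (({v, u} : Finset (Fin ν → ZMod 2)) : Set _) := by simp
          have humem : u ∈ (({v, u} : Finset (Fin ν → ZMod 2)) : Set _) := by simp
          rcases hx with rfl | rfl | rfl | rfl
          · exact Submodule.zero_mem _
          · exact Submodule.subset_span hvmem
          · exact Submodule.subset_span humem
          · exact Submodule.add_mem _ (Submodule.subset_span humem)
              (Submodule.subset_span hvmem)
        · rw [Submodule.span_le]
          intro x hx
          simp only [coe_insert, Set.mem_insert_iff, coe_singleton,
            Set.mem_singleton_iff] at hx
          rcases hx with rfl | rfl
          · exact hvK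
          · exact huK
      rw [hspan]
      exact (finrank_span_finset_le_card _).trans
        ((Finset.card_insert_le _ _).trans (by simp))
    refine ⟨hrank, fun _ => ?_⟩
    -- distinctness
    have huvv : u + v ≠ v := by
      intro h
      have h2 : u + v = 0 + v := by rw [zero_add]; exact h
      exact hu0 (add_right_cancel h2)
    have huvu : u + v ≠ u := by
      intro h
      have h2 : u + v = u + 0 := by rw [add_zero]; exact h
      exact hv0 (add_left_cancel h2)
    have huv0 : u + v ≠ 0 := fun h => huv ((add_eq_zero_iff u v).mp h)
    -- effective length set
    have hE : ({i | ∃ c ∈ K, c i ≠ 0} : Set (Fin ν)) = ((supp u ∪ supp v : Finset (Fin ν)) : Set (Fin ν)) := by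
      ext i
      simp only [Set.mem_setOf_eq, coe_union, Set.mem_union, mem_coe, mem_supp]
      constructor
      · rintro ⟨c, hcK, hci⟩
        rw [← SetLike.mem_coe, hKset] at hcK
        rcases hcK with rfl | rfl | rfl | rfl
        · simp at hci
        · exact Or.inr hci
        · exact Or.inl hci
        · have : ∀ x y : ZMod 2, x + y ≠ 0 → x ≠ 0 ∨ y ≠ 0 := by decide
          exact this _ _ hci
      · rintro (h | h)
        · exact ⟨u, huK, h⟩
        · exact ⟨v, hvK, h⟩
    have hEcard : ({i | ∃ c ∈ K, c i ≠ 0} : Set (Fin ν)).ncard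
        = (supp u \ supp v).card + 20 := by
      rw [hE, Set.ncard_coe_finset, ← card_sdiff_add_card, hvcard]
    rcases key u huK hu0 huv with ⟨hb, hn1, hn2⟩ | ⟨hb, hsum⟩
    · -- b = 6 : weights v:20, u:16, u+v:16
      right
      have hs20 : ({c | c ∈ K ∧ hammingNorm c = 20} : Set (Fin ν → ZMod 2)) = {v} := by
        ext c
        simp only [Set.mem_setOf_eq, Set.mem_singleton_iff]
        constructor
        · rintro ⟨hcK, hc⟩
          rw [← SetLike.mem_coe, hKset] at hcK
          rcases hcK with rfl | rfl | rfl | rfl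
          · rw [hammingNorm_zero] at hc; exact absurd hc (by decide)
          · rfl
          · exact absurd (hn1.symm.trans hc) (by decide)
          · exact absurd (hn2.symm.trans hc) (by decide)
        · rintro rfl; exact ⟨hvK, hv20⟩
      have hs16 : ({c | c ∈ K ∧ hammingNorm c = 16} : Set (Fin ν → ZMod 2)) = {u, u + v} := by
        ext c
        simp only [Set.mem_setOf_eq, Set.mem_insert_iff, Set.mem_singleton_iff]
        constructor
        · rintro ⟨hcK, hc⟩
          rw [← SetLike.mem_coe, hKset] at hcK
          rcases hcK with rfl | rfl | rfl | rfl
          · rw [hammingNorm_zero] at hc; exact absurd hc (by decide)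
          · exact absurd (hv20.symm.trans hc) (by decide)
          · exact Or.inl rfl
          · exact Or.inr rfl
        · rintro (rfl | rfl)
          · exact ⟨huK, hn1⟩
          · exact ⟨K.add_mem huK hvK, hn2⟩
      refine ⟨?_, ?_, ?_⟩
      · rw [hc20, hs20, Set.ncard_singleton]
      · rw [hc16, hs16, Set.ncard_pair huvu.symm]
      · rw [hcE, hEcard, hb]
    · -- b = 8 : weights {u, u+v} = {16, 20}
      left
      have hn : (hammingNorm u = 16 ∧ hammingNorm (u + v) = 20) ∨
          (hammingNorm u = 20 ∧ hammingNorm (u + v) = 16) := by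
        clear hc20 hc16 hcE hEcard hE
        rcases hw u huK hu0 with h | h <;> omega
      have hs : ∃ x y : Fin ν → ZMod 2, ({x, y} : Set (Fin ν → ZMod 2)) = {u, u + v} ∧
          v ≠ x ∧ hammingNorm x = 20 ∧ hammingNorm y = 16 ∧ y ∈ K ∧ x ∈ K := by
        rcases hn with ⟨h1, h2⟩ | ⟨h1, h2⟩
        · exact ⟨u + v, u, by rw [Set.pair_comm], Ne.symm huvv, h2, h1, huK,
            K.add_mem huK hvK⟩
        · exact ⟨u, u + v, rfl, Ne.symm huv, h1, h2, K.add_mem huK hvK, huK⟩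
      obtain ⟨x, y, hxy, hvx, hx20, hy16, hyK, hxK⟩ := hs
      have hs20 : ({c | c ∈ K ∧ hammingNorm c = 20} : Set (Fin ν → ZMod 2)) = {v, x} := by
        ext c
        simp only [Set.mem_setOf_eq, Set.mem_insert_iff, Set.mem_singleton_iff]
        constructor
        · rintro ⟨hcK, hc⟩
          rw [← SetLike.mem_coe, hKset] at hcK
          have hmem : c = u ∨ c = u + v → c ∈ ({x, y} : Set (Fin ν → ZMod 2)) := by
            intro h; rw [hxy]; rcases h with rfl | rfl
            · exact Or.inl rfl
            · exact Or.inr rfl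
          rcases hcK with rfl | rfl | rfl | rfl
          · rw [hammingNorm_zero] at hc; exact absurd hc (by decide)
          · exact Or.inl rfl
          · rcases hmem (Or.inl rfl) with rfl | rfl
            · exact Or.inr rfl
            · exact absurd (hy16.symm.trans hc) (by decide)
          · rcases hmem (Or.inr rfl) with rfl | rfl
            · exact Or.inr rfl
            · exact absurd (hy16.symm.trans hc) (by decide)
        · rintro (rfl | rfl)
          · exact ⟨hvK, hv20⟩
          · exact ⟨hxK, hx20⟩
      have hs16 : ({c | c ∈ K ∧ hammingNorm c = 16} : Set (Fin ν → ZMod 2)) = {y} := by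
        ext c
        simp only [Set.mem_setOf_eq, Set.mem_singleton_iff]
        constructor
        · rintro ⟨hcK, hc⟩
          rw [← SetLike.mem_coe, hKset] at hcK
          have hmem : c = u ∨ c = u + v → c ∈ ({x, y} : Set (Fin ν → ZMod 2)) := by
            intro h; rw [hxy]; rcases h with rfl | rfl
            · exact Or.inl rfl
            · exact Or.inr rfl
          rcases hcK with rfl | rfl | rfl | rfl
          · rw [hammingNorm_zero] at hc; exact absurd hc (by decide)
          · exact absurd (hv20.symm.trans hc) (by decide)
          · rcases hmem (Or.inl rfl) with rfl | rfl
            · exact absurd (hx20.symm.trans hc) (by decide)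
            · rfl
          · rcases hmem (Or.inr rfl) with rfl | rfl
            · exact absurd (hx20.symm.trans hc) (by decide)
            · rfl
        · rintro rfl; exact ⟨hyK, hy16⟩
      refine ⟨?_, ?_, ?_⟩
      · rw [hc20, hs20, Set.ncard_pair hvx]
      · rw [hc16, hs16, Set.ncard_singleton]
      · rw [hcE, hEcard, hb]
  · -- K ⊆ {0, v}
    push_neg at hU
    have hspan : K = Submodule.span (ZMod 2) (({v} : Finset (Fin ν → ZMod 2)) : Set _) := by
      apply le_antisymm
      · intro x hx
        by_cases hx0 : x = 0
        · subst hx0; exact Submodule.zero_mem _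
        · have := hU x hx hx0
          subst this
          exact Submodule.subset_span (by simp)
      · rw [Submodule.span_le]
        intro x hx
        simp only [coe_singleton, Set.mem_singleton_iff] at hx
        subst hx; exact hvK
    have hrank : Module.finrank (ZMod 2) K ≤ 1 := by
      rw [hspan]
      exact (finrank_span_finset_le_card _).trans (by simp)
    refine ⟨hrank.trans one_le_two, fun h => ?_⟩
    rw [h] at hrank
    exact absurd hrank (by decide)
end

section
/- Let K' ⊆ 𝔽_2^{ν} ⊕ 𝔽_2·H be a bicoloured binary code with ν ≤ 14, let K = K' ∩ 𝔽_2^{ν}, and let K'' be the projection of K' to 𝔽_2^{ν}. Assume every nonzero codeword of K has weight divisible by 8, every codeword in K'' \ K has weight in {2, 6, 10, 14}, some codeword u ∈ K'' \ K has weight exactly 14, dim K' ≤ dim K + 1, and dim K' ≥ ν − 10. Then ν = 14, dim K = 3, and, up to a permutation of coordinates, u = Σ_{i=1}^{14} e_i and K is spanned by Σ_{i=1}^{8} e_i, Σ_{i=5}^{12} e_i, and Σ_{j=0}^{3} (e_{1+4j} + e_{2+4j}). -/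
/-!
Since `u` has weight 14 and `ν ≤ 14`, `ν = 14` and `u` is the all-ones word. As
`dim K ≥ dim K' - 1 ≥ 3` and the nonzero weights of `K` are multiples of 8 that are at most 14,
`K` is a code of constant weight 8. A coordinate which is not identically zero on `K` is nonzero
on exactly half of `K`, so counting the total weight by coordinates gives
`8 (|K| - 1) ≤ 14 |K| / 2`: hence `|K| = 8` and no coordinate vanishes on `K`. The columns of a
generator matrix are then nonzero vectors of `𝔽₂³`; summing the weights of the codewords
encoding the three nonzero messages orthogonal to a fixed `v ≠ 0` shows that `v` is exactly two
of the columns. So every nonzero vector of `𝔽₂³` is exactly two columns, which pins `K` down up to a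
permutation of the coordinates.
-/

open Finset Matrix Module

lemma hammingNorm_eq_card_iff {ι : Type*} [Fintype ι] {β : ι → Type*} [∀ i, Zero (β i)]
    [∀ i, DecidableEq (β i)] {x : ∀ i, β i} :
    hammingNorm x = Fintype.card ι ↔ ∀ i, x i ≠ 0 := by
  simp [hammingNorm, ← card_univ, card_filter_eq_iff]

lemma AddMonoidHom.two_mul_card_filter_ne_zero {G : Type*} [AddGroup G] [Fintype G]
    (φ : G →+ ZMod 2) {g₀ : G} (hg₀ : φ g₀ ≠ 0) :
    2 * #{g | φ g ≠ 0} = Fintype.card G := by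
  have hfiber : #{g | φ g = 0} = #{g | φ g ≠ 0} := by
    rw [AddMonoidHom.card_fiber_eq_of_mem_range φ ⟨0, map_zero φ⟩ ⟨g₀, rfl⟩]
    congr! 2 with g
    constructor
    · rintro h h0
      exact hg₀ (h ▸ h0)
    · intro h
      rw [Fin.eq_one_of_ne_zero _ h, Fin.eq_one_of_ne_zero _ hg₀]
  rw [← card_univ, ← card_filter_add_card_filter_not (s := univ) (p := fun g => φ g = 0), hfiber]
  ring

lemma Equiv.Perm.exists_comp_eq_of_card_fiber_eq {α β : Type*} [Fintype α] [DecidableEq β]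
    (f g : α → β) (h : ∀ b, #{a | f a = b} = #{a | g a = b}) :
    ∃ σ : Equiv.Perm α, g ∘ σ = f := by
  let e (b : β) : {a // f a = b} ≃ {a // g a = b} :=
    Fintype.equivOfCardEq (by simpa only [Fintype.card_subtype] using h b)
  exact ⟨Equiv.ofFiberEquiv e, funext (Equiv.ofFiberEquiv_map e)⟩

section SubmoduleBasis

variable {ι n R : Type*} [CommRing R] {K : Submodule R (ι → R)} (b : Basis n R K)

lemma Module.Basis.coe_equivFun_symm_apply [Fintype n] (x : n → R) (i : ι) :
    (b.equivFun.symm x : ι → R) i = x ⬝ᵥ fun j => (b j : ι → R) i := by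
  simp [Basis.equivFun_symm_apply, dotProduct, Finset.sum_apply]

lemma Module.Basis.span_range_coe :
    Submodule.span R (Set.range fun j => (b j : ι → R)) = K := by
  have h := congrArg (Submodule.map K.subtype) b.span_eq
  rwa [Submodule.map_span, Submodule.map_top, Submodule.range_subtype, ← Set.range_comp] at h

end SubmoduleBasis

section BinaryCode

variable {ι : Type*} (K : Submodule (ZMod 2) (ι → ZMod 2)) [Fintype K]

lemma sum_hammingNorm_eq_sum_card_filter [Fintype ι] :
    ∑ c : K, hammingNorm (c : ι → ZMod 2) = ∑ i, #{c : K | (c : ι → ZMod 2) i ≠ 0} :=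
  sum_card_bipartiteAbove_eq_sum_card_bipartiteBelow _

lemma two_mul_card_filter_apply_ne_zero {i : ι} {c₀ : ι → ZMod 2} (hc₀ : c₀ ∈ K)
    (hi : c₀ i ≠ 0) : 2 * #{c : K | (c : ι → ZMod 2) i ≠ 0} = Fintype.card K :=
  ((LinearMap.proj i).comp K.subtype).toAddMonoidHom.two_mul_card_filter_ne_zero
    (g₀ := ⟨c₀, hc₀⟩) hi

/-- The double count behind the Plotkin bound. -/
theorem two_mul_sum_hammingNorm_add_card_mul [Fintype ι] :
    2 * ∑ c : K, hammingNorm (c : ι → ZMod 2) +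
        #{i | ∀ c : K, (c : ι → ZMod 2) i = 0} * Fintype.card K =
      Fintype.card ι * Fintype.card K := by
  have hcoord (i : ι) : 2 * #{c : K | (c : ι → ZMod 2) i ≠ 0} +
      (if ∀ c : K, (c : ι → ZMod 2) i = 0 then Fintype.card K else 0) = Fintype.card K := by
    by_cases hi : ∀ c : K, (c : ι → ZMod 2) i = 0
    · simp [hi]
    · obtain ⟨c₀, hc₀⟩ := not_forall.mp hi
      rw [if_neg hi, add_zero, two_mul_card_filter_apply_ne_zero K c₀.2 hc₀]
  have hzero : #{i | ∀ c : K, (c : ι → ZMod 2) i = 0} * Fintype.card K =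
      ∑ i, if ∀ c : K, (c : ι → ZMod 2) i = 0 then Fintype.card K else 0 := by
    simp only [card_filter, sum_mul, ite_mul, one_mul, zero_mul]
  rw [sum_hammingNorm_eq_sum_card_filter, mul_sum, hzero, ← sum_add_distrib,
    sum_congr rfl fun i _ => hcoord i, sum_const, card_univ, smul_eq_mul]

lemma sum_hammingNorm_eq_mul_of_forall_hammingNorm_eq [Fintype ι] {w : ℕ}
    (hw : ∀ c ∈ K, c ≠ 0 → hammingNorm c = w) :
    ∑ c : K, hammingNorm (c : ι → ZMod 2) = w * (Fintype.card K - 1) := by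
  rw [← sum_erase_add _ _ (mem_univ 0), Submodule.coe_zero, hammingNorm_zero, add_zero,
    sum_congr rfl fun (c : K) hc => hw c c.2 (by simpa using ne_of_mem_erase hc), sum_const,
    card_erase_of_mem (mem_univ 0), card_univ, smul_eq_mul, mul_comm]

end BinaryCode

lemma card_filter_dotProduct_eq_zero_fin_three {v : Fin 3 → ZMod 2} (hv : v ≠ 0) :
    #{x : Fin 3 → ZMod 2 | x ≠ 0 ∧ x ⬝ᵥ v = 0} = 3 := by
  revert v; decide

lemma card_filter_dotProduct_ne_zero_fin_three {v w : Fin 3 → ZMod 2} (hv : v ≠ 0)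
    (hw : w ≠ 0) :
    #{x : Fin 3 → ZMod 2 | (x ≠ 0 ∧ x ⬝ᵥ v = 0) ∧ x ⬝ᵥ w ≠ 0} = if w = v then 0 else 2 := by
  revert v w; decide

/-- Double count of the pairs `(x, i)` with `x` one of the three nonzero vectors orthogonal to
`v` and `x ⬝ᵥ col i ≠ 0`. -/
lemma two_mul_card_fiber_add_three_mul {ι : Type*} [Fintype ι] (col : ι → Fin 3 → ZMod 2)
    (hcol : ∀ i, col i ≠ 0) {w : ℕ} (hw : ∀ x ≠ 0, #{i | x ⬝ᵥ col i ≠ 0} = w)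
    {v : Fin 3 → ZMod 2} (hv : v ≠ 0) :
    2 * #{i | col i = v} + 3 * w = 2 * Fintype.card ι := by
  have hcount := sum_card_bipartiteAbove_eq_sum_card_bipartiteBelow
    (s := {x : Fin 3 → ZMod 2 | x ≠ 0 ∧ x ⬝ᵥ v = 0}) (t := univ)
    (fun x i => x ⬝ᵥ col i ≠ 0)
  simp only [bipartiteAbove, bipartiteBelow, filter_filter] at hcount
  rw [sum_congr rfl fun x hx => hw x (mem_filter.mp hx).2.1, sum_const,
    card_filter_dotProduct_eq_zero_fin_three hv,
    sum_congr rfl fun i _ => card_filter_dotProduct_ne_zero_fin_three hv (hcol i),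
    sum_ite, sum_const_zero, sum_const, smul_eq_mul, smul_eq_mul, zero_add] at hcount
  have hsplit := card_filter_add_card_filter_not (s := univ) (p := fun i => col i = v)
  rw [card_univ] at hsplit
  omega

/-- Its columns run through the nonzero vectors of `𝔽₂³`, each twice. -/
def stdGen : Fin 3 → Fin 14 → ZMod 2 :=
  ![fun i => if (i : ℕ) < 8 then 1 else 0,
    fun i => if 4 ≤ (i : ℕ) ∧ (i : ℕ) < 12 then 1 else 0,
    fun i => if (i : ℕ) % 4 < 2 then 1 else 0]

lemma card_filter_stdGen_col_eq (v : Fin 3 → ZMod 2) :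
    #{i | (fun j => stdGen j i) = v} = if v = 0 then 0 else 2 := by
  revert v; decide

theorem finrank_eq_three_of_hammingNorm_eq_eight (K : Submodule (ZMod 2) (Fin 14 → ZMod 2))
    (h3 : 3 ≤ finrank (ZMod 2) K) (hw : ∀ c ∈ K, c ≠ 0 → hammingNorm c = 8) :
    finrank (ZMod 2) K = 3 ∧ ∀ i, ∃ c ∈ K, c i ≠ 0 := by
  let _ : Fintype K := Fintype.ofFinite K
  have hcard : Fintype.card K = 2 ^ finrank (ZMod 2) K := by
    rw [card_eq_pow_finrank (K := ZMod 2), ZMod.card]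
  have h8 : 8 ≤ Fintype.card K :=
    hcard ▸ (Nat.pow_le_pow_right two_pos h3 : 2 ^ 3 ≤ _)
  have hplotkin := two_mul_sum_hammingNorm_add_card_mul K
  rw [sum_hammingNorm_eq_mul_of_forall_hammingNorm_eq K hw, Fintype.card_fin] at hplotkin
  set Z := #{i | ∀ c : K, (c : Fin 14 → ZMod 2) i = 0}
  have hZ : Z = 0 := by
    by_contra hZ
    have : Fintype.card K ≤ Z * Fintype.card K :=
      Nat.le_mul_of_pos_left _ (Nat.pos_of_ne_zero hZ)
    omega
  rw [hZ, zero_mul] at hplotkin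
  refine ⟨Nat.pow_right_injective le_rfl (show 2 ^ _ = 2 ^ 3 by omega), fun i => ?_⟩
  obtain ⟨c, hc⟩ := not_forall.mp (filter_eq_empty_iff.mp (card_eq_zero.mp hZ) (mem_univ i))
  exact ⟨c, c.2, hc⟩

theorem exists_perm_eq_span_stdGen (K : Submodule (ZMod 2) (Fin 14 → ZMod 2))
    (hK : finrank (ZMod 2) K = 3) (hcoord : ∀ i, ∃ c ∈ K, c i ≠ 0)
    (hw : ∀ c ∈ K, c ≠ 0 → hammingNorm c = 8) :
    ∃ σ : Equiv.Perm (Fin 14),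
      K = Submodule.span (ZMod 2) (Set.range fun j => stdGen j ∘ σ) := by
  let b := Module.finBasisOfFinrankEq (ZMod 2) K hK
  let col (i : Fin 14) : Fin 3 → ZMod 2 := fun j => (b j : Fin 14 → ZMod 2) i
  have hcol (i : Fin 14) : col i ≠ 0 := by
    obtain ⟨c, hc, hci⟩ := hcoord i
    intro h
    apply hci
    rw [show c = (b.equivFun.symm (b.equivFun ⟨c, hc⟩) : K) by simp,
      b.coe_equivFun_symm_apply]
    exact (congrArg _ h).trans (dotProduct_zero _)
  have hwcol (x : Fin 3 → ZMod 2) (hx : x ≠ 0) : #{i | x ⬝ᵥ col i ≠ 0} = 8 := by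
    have hc : (b.equivFun.symm x : Fin 14 → ZMod 2) ≠ 0 := by
      rwa [ne_eq, Submodule.coe_eq_zero, LinearEquiv.map_eq_zero_iff]
    rw [← hw _ (b.equivFun.symm x).2 hc, hammingNorm]
    simp only [b.coe_equivFun_symm_apply, col]
  have hfiber (v : Fin 3 → ZMod 2) : #{i | col i = v} = #{i | (fun j => stdGen j i) = v} := by
    rw [card_filter_stdGen_col_eq]
    split_ifs with hv
    · simpa [hv] using hcol
    · have := two_mul_card_fiber_add_three_mul col hcol hwcol hv
      simp only [Fintype.card_fin] at this
      omega
  obtain ⟨σ, hσ⟩ := Equiv.Perm.exists_comp_eq_of_card_fiber_eq col _ hfiber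
  have hrows : (fun j => stdGen j ∘ σ) = fun j => (b j : Fin 14 → ZMod 2) := by
    funext j i
    exact congrFun (congrFun hσ i) j
  exact ⟨σ, by rw [hrows, b.span_range_coe]⟩

theorem stmt18_general (ν : ℕ) (hν : ν ≤ 14)
    (K' : Submodule (ZMod 2) ((Fin ν → ZMod 2) × ZMod 2))
    (K : Submodule (ZMod 2) (Fin ν → ZMod 2))
    (hwK : ∀ c ∈ K, c ≠ 0 → 8 ∣ hammingNorm c)
    (u : Fin ν → ZMod 2) (hu14 : hammingNorm u = 14)
    (hdim : Module.finrank (ZMod 2) K' ≤ Module.finrank (ZMod 2) K + 1)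
    (hB : ν ≤ Module.finrank (ZMod 2) K' + 10) :
    ν = 14 ∧ Module.finrank (ZMod 2) K = 3 ∧
      ∃ σ : Equiv.Perm (Fin ν),
        (u ∘ ⇑σ = fun _ => 1) ∧
        K = Submodule.span (ZMod 2)
          {(fun i : Fin ν => if (i : ℕ) < 8 then (1 : ZMod 2) else 0) ∘ ⇑σ,
           (fun i : Fin ν => if 4 ≤ (i : ℕ) ∧ (i : ℕ) < 12 then (1 : ZMod 2) else 0) ∘ ⇑σ,
           (fun i : Fin ν => if (i : ℕ) % 4 < 2 then (1 : ZMod 2) else 0) ∘ ⇑σ} := by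
  obtain rfl : ν = 14 :=
    le_antisymm hν (hu14 ▸ hammingNorm_le_card_fintype.trans_eq (Fintype.card_fin ν))
  have hu (i : Fin 14) : u i = 1 :=
    Fin.eq_one_of_ne_zero _ (hammingNorm_eq_card_iff.mp (by rwa [Fintype.card_fin]) i)
  have hw8 (c) (hc : c ∈ K) (hc0 : c ≠ 0) : hammingNorm c = 8 := by
    have hle := hammingNorm_le_card_fintype (x := c)
    have hpos := hammingNorm_pos_iff.mpr hc0
    obtain ⟨m, hm⟩ := hwK c hc hc0
    rw [Fintype.card_fin] at hle
    omega
  obtain ⟨hK3, hcoord⟩ := finrank_eq_three_of_hammingNorm_eq_eight K (by omega) hw8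
  obtain ⟨σ, hσ⟩ := exists_perm_eq_span_stdGen K hK3 hcoord hw8
  refine ⟨rfl, hK3, σ, funext fun i => hu (σ i), ?_⟩
  rw [hσ, Fin.range_fin_succ, Fin.range_fin_succ, Fin.range_fin_succ, Set.range_eq_empty,
    insert_empty_eq]
  rfl

/-- Classification of bicoloured codes of nodal K3 type admitting a half-even set of
cardinality `t = 14`.  `K' ⊆ 𝔽_2^ν ⊕ 𝔽_2·H` is modelled as a submodule of
`(Fin ν → ZMod 2) × ZMod 2`; `K` is the subcode with `H`-coordinate `0` and `K''` is
the projection to `𝔽_2^ν`.  If `ν ≤ 14`, all nonzero weights of `K` are divisible by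
`8`, all weights of `K'' \ K` lie in `{2, 6, 10, 14}`, some `u ∈ K'' \ K` has weight
`14`, `dim K' ≤ dim K + 1` and the B-inequality `dim K' ≥ ν − 10` holds, then `ν = 14`,
`dim K = 3`, and up to a permutation of the coordinates `u = Σ_{i=1}^{14} e_i` and `K`
is spanned by `Σ_{i=1}^{8} e_i`, `Σ_{i=5}^{12} e_i`, `Σ_{j=0}^{3}(e_{1+4j}+e_{2+4j})`. -/
theorem stmt18 (ν : ℕ) (hν : ν ≤ 14)
    (K' : Submodule (ZMod 2) ((Fin ν → ZMod 2) × ZMod 2))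
    (K K'' : Submodule (ZMod 2) (Fin ν → ZMod 2))
    (hK : K = K'.comap (LinearMap.inl (ZMod 2) (Fin ν → ZMod 2) (ZMod 2)))
    (hK'' : K'' = K'.map (LinearMap.fst (ZMod 2) (Fin ν → ZMod 2) (ZMod 2)))
    (hwK : ∀ c ∈ K, c ≠ 0 → 8 ∣ hammingNorm c)
    (hwK'' : ∀ c ∈ K'', c ∉ K →
      hammingNorm c = 2 ∨ hammingNorm c = 6 ∨ hammingNorm c = 10 ∨ hammingNorm c = 14)
    (u : Fin ν → ZMod 2) (hu : u ∈ K'') (huK : u ∉ K) (hu14 : hammingNorm u = 14)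
    (hdim : Module.finrank (ZMod 2) K' ≤ Module.finrank (ZMod 2) K + 1)
    (hB : ν ≤ Module.finrank (ZMod 2) K' + 10) :
    ν = 14 ∧ Module.finrank (ZMod 2) K = 3 ∧
      ∃ σ : Equiv.Perm (Fin ν),
        (u ∘ ⇑σ = fun _ => 1) ∧
        K = Submodule.span (ZMod 2)
          {(fun i : Fin ν => if (i : ℕ) < 8 then (1 : ZMod 2) else 0) ∘ ⇑σ,
           (fun i : Fin ν => if 4 ≤ (i : ℕ) ∧ (i : ℕ) < 12 then (1 : ZMod 2) else 0) ∘ ⇑σ,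
           (fun i : Fin ν => if (i : ℕ) % 4 < 2 then (1 : ZMod 2) else 0) ∘ ⇑σ} :=
  stmt18_general ν hν K' K hwK u hu14 hdim hB
end
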